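/- arXiv:2502.05472 — 5 statements merged into one kernel-verified Lean document; each statement's English description precedes it below -/
import Mathlib

section
/- Suppose a signed graph admits a weakly balanced partition. For vertices i and j, let μ_l⁺(i,j) and μ_l⁻(i,j) denote the numbers of positive and negative walks of length l from i to j, and define the non-noise score Γ_{ij} = ∑_{l=1}^{L'} α_l (μ_l⁺(i,j) − μ_l⁻(i,j)) for any positive coefficients α_l. Then Γ_{ij} ≥ 0 whenever i and j lie in the same cluster, and Γ_{ij} ≤ 0 whenever they lie in different clusters. -/
open Matrix BigOperators

/-- Number of positive walks (all edges positive) of length `l` from `i` to `j`. -/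
def countPosWalks {n : ℕ} (A : Matrix (Fin n) (Fin n) ℤ) (l : ℕ) (i j : Fin n) : ℕ :=
  (Finset.univ.filter (fun w : Fin (l + 1) → Fin n =>
    w 0 = i ∧ w (Fin.last l) = j ∧
      ∀ k : Fin l, A (w k.castSucc) (w k.succ) = 1)).card

/-- Number of negative walks (exactly one negative edge, all others positive)
of length `l` from `i` to `j`. -/
def countNegWalks {n : ℕ} (A : Matrix (Fin n) (Fin n) ℤ) (l : ℕ) (i j : Fin n) : ℕ :=
  (Finset.univ.filter (fun w : Fin (l + 1) → Fin n =>
    w 0 = i ∧ w (Fin.last l) = j ∧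
      ∃ k0 : Fin l, A (w k0.castSucc) (w k0.succ) = -1 ∧
        ∀ k : Fin l, k ≠ k0 → A (w k.castSucc) (w k.succ) = 1)).card

/-- Positive part of a signed adjacency matrix. -/
def posPart {n : ℕ} (A : Matrix (Fin n) (Fin n) ℤ) : Matrix (Fin n) (Fin n) ℤ :=
  Matrix.of fun i j => max (A i j) 0

/-- Negative part of a signed adjacency matrix. -/
def negPart {n : ℕ} (A : Matrix (Fin n) (Fin n) ℤ) : Matrix (Fin n) (Fin n) ℤ :=
  Matrix.of fun i j => -min (A i j) 0

/-!
Along a positive edge the cluster does not change, and across a negative edge it does. Hence a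
positive walk stays inside one cluster, while a negative walk is a positive walk, one edge
between two different clusters and another positive walk, so it ends in a different cluster
from where it started. Consequently, for `i` and `j` in the same cluster every term of `Γ` is
`α l` times a count of positive walks, and otherwise it is `-α l` times a count of negative walks.
-/

theorem Fin.apply_eq_apply_of_castSucc_eq_succ {β : Type*} {l : ℕ} (g : Fin (l + 1) → β)
    {a b : Fin (l + 1)} (hab : a ≤ b)
    (h : ∀ k : Fin l, a ≤ k.castSucc → k.succ ≤ b → g k.castSucc = g k.succ) :
    g a = g b := by
  suffices ∀ m : Fin (l + 1), a ≤ m → m ≤ b → g a = g m from this b hab le_rfl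
  intro m
  induction m using Fin.induction with
  | zero =>
    intro ha _
    rw [nonpos_iff_eq_zero.mp ha]
  | succ k ih =>
    intro ha hb
    rcases ha.eq_or_lt with rfl | hlt
    · rfl
    · have hak : a ≤ k.castSucc := Fin.le_castSucc_iff.mpr hlt
      exact (ih hak (Fin.castSucc_lt_succ.le.trans hb)).trans (h k hak hb)

section WeaklyBalanced

variable {n : ℕ} {β : Type*} {A : Matrix (Fin n) (Fin n) ℤ} {c : Fin n → β}

theorem countPosWalks_eq_zero_of_ne (hpos : ∀ u v, A u v = 1 → c u = c v) {l : ℕ}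
    {i j : Fin n} (hij : c i ≠ c j) : countPosWalks A l i j = 0 := by
  rw [countPosWalks, Finset.card_eq_zero, Finset.filter_eq_empty_iff]
  rintro w - ⟨rfl, rfl, hw⟩
  exact hij <| Fin.apply_eq_apply_of_castSucc_eq_succ (c ∘ w) (Fin.zero_le _)
    fun k _ _ => hpos _ _ (hw k)

theorem countNegWalks_eq_zero_of_eq (hpos : ∀ u v, A u v = 1 → c u = c v)
    (hneg : ∀ u v, A u v = -1 → c u ≠ c v) {l : ℕ} {i j : Fin n} (hij : c i = c j) :
    countNegWalks A l i j = 0 := by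
  rw [countNegWalks, Finset.card_eq_zero, Finset.filter_eq_empty_iff]
  rintro w - ⟨rfl, rfl, k₀, hk₀, hw⟩
  have before : c (w 0) = c (w k₀.castSucc) :=
    Fin.apply_eq_apply_of_castSucc_eq_succ (c ∘ w) (Fin.zero_le _)
      fun k _ hk => hpos _ _ <| hw k fun h => by subst h; simp at hk
  have after : c (w k₀.succ) = c (w (Fin.last l)) :=
    Fin.apply_eq_apply_of_castSucc_eq_succ (c ∘ w) (Fin.le_last _)
      fun k hk _ => hpos _ _ <| hw k fun h => by subst h; simp at hk
  exact hneg _ _ hk₀ (before.symm.trans (hij.trans after.symm))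

end WeaklyBalanced

theorem nonnoise_score_sign_general {n K : ℕ} (A : Matrix (Fin n) (Fin n) ℤ)
    (c : Fin n → Fin K)
    (hwb : ∀ u v, (A u v = 1 → c u = c v) ∧ (A u v = -1 → c u ≠ c v))
    (L : ℕ) (α : ℕ → ℝ) (hα : ∀ l, 0 < α l) (i j : Fin n) :
    let Γ : ℝ := ∑ l ∈ Finset.Icc 1 L,
      α l * ((countPosWalks A l i j : ℝ) - (countNegWalks A l i j : ℝ))
    (c i = c j → 0 ≤ Γ) ∧ (c i ≠ c j → Γ ≤ 0) := by
  have hpos u v := (hwb u v).1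
  have hneg u v := (hwb u v).2
  refine ⟨fun hij => Finset.sum_nonneg fun l _ => ?_, fun hij => Finset.sum_nonpos fun l _ => ?_⟩
  · rw [countNegWalks_eq_zero_of_eq hpos hneg hij, Nat.cast_zero, sub_zero]
    exact mul_nonneg (hα l).le (Nat.cast_nonneg _)
  · rw [countPosWalks_eq_zero_of_ne hpos hij, Nat.cast_zero, zero_sub]
    exact mul_nonpos_of_nonneg_of_nonpos (hα l).le (neg_nonpos.mpr (Nat.cast_nonneg _))

theorem nonnoise_score_sign {n K : ℕ} (A : Matrix (Fin n) (Fin n) ℤ)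
    (c : Fin n → Fin K)
    (hwb : ∀ u v, (A u v = 1 → c u = c v) ∧ (A u v = -1 → c u ≠ c v))
    (L : ℕ) (hL : 1 ≤ L) (α : ℕ → ℝ) (hα : ∀ l, 0 < α l) (i j : Fin n) :
    let Γ : ℝ := ∑ l ∈ Finset.Icc 1 L,
      α l * ((countPosWalks A l i j : ℝ) - (countNegWalks A l i j : ℝ))
    (c i = c j → 0 ≤ Γ) ∧ (c i ≠ c j → Γ ≤ 0) :=
  nonnoise_score_sign_general A c hwb L α hα i j
end

section
/- Let G be a signed graph with a weakly balanced partition into clusters, with positive and negative adjacency matrices Â⁺ and Â⁻. Then for any m⁺ ≥ 1, the (i,j) entry of (Â⁺)^{m⁺} is nonzero only if i and j belong to the same cluster; and for any m⁻ ≥ 0, the (i,j) entry of ∑_{a=0}^{m⁻} (Â⁺)^a Â⁻ (Â⁺)^{m⁻−a} is nonzero only if i and j belong to different clusters. Hence Density-based Augmentation preserves weak balance. -/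
open Matrix BigOperators

/-! A nonzero entry of a product of matrices comes from a walk of nonzero entries. Along a walk of
positive edges the cluster never changes, while a walk with exactly one negative edge changes it
exactly once, at that edge. -/

namespace Matrix

variable {ι κ α : Type*}

theorem exists_ne_zero_of_mul_apply_ne_zero [Fintype ι] [NonUnitalNonAssocSemiring α]
    {A B : Matrix ι ι α} {i j : ι} (h : (A * B) i j ≠ 0) :
    ∃ k, A i k ≠ 0 ∧ B k j ≠ 0 := by
  obtain ⟨k, -, hk⟩ := Finset.exists_ne_zero_of_sum_ne_zero h
  exact ⟨k, left_ne_zero_of_mul hk, right_ne_zero_of_mul hk⟩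

def IsBlockDiagonal [Zero α] (A : Matrix ι ι α) (c : ι → κ) : Prop :=
  ∀ i j, A i j ≠ 0 → c i = c j

def IsOffBlockDiagonal [Zero α] (A : Matrix ι ι α) (c : ι → κ) : Prop :=
  ∀ i j, A i j ≠ 0 → c i ≠ c j

variable {c : ι → κ}

theorem IsBlockDiagonal.one [DecidableEq ι] [Zero α] [One α] :
    IsBlockDiagonal (1 : Matrix ι ι α) c := by
  intro i j h
  by_cases hij : i = j
  · rw [hij]
  · exact absurd (one_apply_ne hij) h

theorem IsBlockDiagonal.mul [Fintype ι] [NonUnitalNonAssocSemiring α] {A B : Matrix ι ι α}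
    (hA : IsBlockDiagonal A c) (hB : IsBlockDiagonal B c) : IsBlockDiagonal (A * B) c := by
  intro i j h
  obtain ⟨k, hik, hkj⟩ := exists_ne_zero_of_mul_apply_ne_zero h
  exact (hA i k hik).trans (hB k j hkj)

theorem IsBlockDiagonal.pow [Fintype ι] [DecidableEq ι] [Semiring α] {A : Matrix ι ι α}
    (hA : IsBlockDiagonal A c) (m : ℕ) : IsBlockDiagonal (A ^ m) c := by
  induction m with
  | zero => exact pow_zero A ▸ IsBlockDiagonal.one
  | succ m ih => exact pow_succ A m ▸ ih.mul hA

theorem IsBlockDiagonal.mul_isOffBlockDiagonal [Fintype ι] [NonUnitalNonAssocSemiring α]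
    {A B : Matrix ι ι α} (hA : IsBlockDiagonal A c) (hB : IsOffBlockDiagonal B c) :
    IsOffBlockDiagonal (A * B) c := by
  intro i j h
  obtain ⟨k, hik, hkj⟩ := exists_ne_zero_of_mul_apply_ne_zero h
  exact hA i k hik ▸ hB k j hkj

theorem IsOffBlockDiagonal.mul_isBlockDiagonal [Fintype ι] [NonUnitalNonAssocSemiring α]
    {A B : Matrix ι ι α} (hA : IsOffBlockDiagonal A c) (hB : IsBlockDiagonal B c) :
    IsOffBlockDiagonal (A * B) c := by
  intro i j h
  obtain ⟨k, hik, hkj⟩ := exists_ne_zero_of_mul_apply_ne_zero h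
  exact hB k j hkj ▸ hA i k hik

theorem IsOffBlockDiagonal.sum [AddCommMonoid α] {β : Type*} {s : Finset β}
    {A : β → Matrix ι ι α} (hA : ∀ a ∈ s, IsOffBlockDiagonal (A a) c) :
    IsOffBlockDiagonal (∑ a ∈ s, A a) c := by
  intro i j h
  rw [sum_apply] at h
  obtain ⟨a, ha, hij⟩ := Finset.exists_ne_zero_of_sum_ne_zero h
  exact hA a ha i j hij

end Matrix

theorem density_augmentation_preserves_weak_balance_general {n K : ℕ}
    (Ap Am : Matrix (Fin n) (Fin n) ℝ) (c : Fin n → Fin K)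
    (hApc : ∀ i j, Ap i j ≠ 0 → c i = c j)
    (hAmc : ∀ i j, Am i j ≠ 0 → c i ≠ c j) :
    (∀ m : ℕ, 1 ≤ m → ∀ i j, (Ap ^ m) i j ≠ 0 → c i = c j) ∧
    (∀ m : ℕ, ∀ i j,
      (∑ a ∈ Finset.range (m + 1), Ap ^ a * Am * Ap ^ (m - a)) i j ≠ 0 → c i ≠ c j) := by
  have hAp : IsBlockDiagonal Ap c := hApc
  have hAm : IsOffBlockDiagonal Am c := hAmc
  exact ⟨fun m _ => hAp.pow m,
    fun m => IsOffBlockDiagonal.sum fun a _ => ((hAp.pow a).mul_isOffBlockDiagonal hAm).mul_isBlockDiagonal (hAp.pow _)⟩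

theorem density_augmentation_preserves_weak_balance {n K : ℕ}
    (Ap Am : Matrix (Fin n) (Fin n) ℝ) (c : Fin n → Fin K)
    (hAp01 : ∀ i j, Ap i j = 0 ∨ Ap i j = 1)
    (hAm01 : ∀ i j, Am i j = 0 ∨ Am i j = 1)
    (hApc : ∀ i j, Ap i j ≠ 0 → c i = c j)
    (hAmc : ∀ i j, Am i j ≠ 0 → c i ≠ c j) :
    (∀ m : ℕ, 1 ≤ m → ∀ i j, (Ap ^ m) i j ≠ 0 → c i = c j) ∧
    (∀ m : ℕ, ∀ i j,
      (∑ a ∈ Finset.range (m + 1), Ap ^ a * Am * Ap ^ (m - a)) i j ≠ 0 → c i ≠ c j) :=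
  density_augmentation_preserves_weak_balance_general Ap Am c hApc hAmc
end

section
/- Let C ∈ {0,1}^{n×K} be a hard cluster assignment matrix whose rows each contain exactly one 1 (each vertex belongs to exactly one cluster). Let L⁺ = D⁺ − A⁺ be the positive Laplacian and A⁻ the negative adjacency matrix of a signed graph. Then ∑_{k=1}^{K} C_{:,k}ᵀ (L⁺ + A⁻) C_{:,k} = (number of ordered pairs (i,j) forming a positive edge with i, j in different clusters) + (number of ordered pairs (i,j) forming a negative edge with i, j in the same cluster); equivalently it counts twice the total number of violated undirected edges of the partition. -/
open Matrix BigOperators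

theorem clustering_loss_counts_violations {n K : ℕ}
    (Ap Am : Matrix (Fin n) (Fin n) ℤ)
    (hsp : Ap.IsSymm) (hsm : Am.IsSymm)
    (hp01 : ∀ i j, Ap i j = 0 ∨ Ap i j = 1)
    (hm01 : ∀ i j, Am i j = 0 ∨ Am i j = 1)
    (hpd : ∀ i, Ap i i = 0) (hmd : ∀ i, Am i i = 0)
    (hdisj : ∀ i j, Ap i j = 0 ∨ Am i j = 0)
    (c : Fin n → Fin K) :
    let C : Matrix (Fin n) (Fin K) ℤ := Matrix.of fun i k => if c i = k then 1 else 0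
    let Dp : Matrix (Fin n) (Fin n) ℤ := Matrix.diagonal fun i => ∑ j, Ap i j
    (∑ k : Fin K, (fun i => C i k) ⬝ᵥ (((Dp - Ap) + Am) *ᵥ fun i => C i k) =
      ((Finset.univ.filter (fun p : Fin n × Fin n =>
        Ap p.1 p.2 = 1 ∧ c p.1 ≠ c p.2)).card : ℤ) +
      ((Finset.univ.filter (fun p : Fin n × Fin n =>
        Am p.1 p.2 = 1 ∧ c p.1 = c p.2)).card : ℤ)) ∧
    (∑ k : Fin K, (fun i => C i k) ⬝ᵥ (((Dp - Ap) + Am) *ᵥ fun i => C i k) =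
      2 * (((Finset.univ.filter (fun p : Fin n × Fin n =>
        p.1 < p.2 ∧ (Ap p.1 p.2 = 1 ∧ c p.1 ≠ c p.2 ∨
          Am p.1 p.2 = 1 ∧ c p.1 = c p.2))).card : ℤ))) := by
  intro C Dp
  set M := (Dp - Ap) + Am with hMdef
  have hM : ∀ i j, M i j = (if i = j then ∑ l, Ap i l else 0) - Ap i j + Am i j := by
    intro i j
    simp [hMdef, Dp, Matrix.sub_apply, Matrix.add_apply, Matrix.diagonal]
  -- quadratic form as a double sum
  have key : (∑ k : Fin K, (fun i => C i k) ⬝ᵥ (M *ᵥ fun i => C i k)) =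
      ∑ i, ∑ j, (if c i = c j then M i j else 0) := by
    simp only [dotProduct, mulVec, dotProduct, Finset.mul_sum]
    rw [Finset.sum_comm]
    refine Finset.sum_congr rfl fun i _ => ?_
    rw [Finset.sum_comm]
    refine Finset.sum_congr rfl fun j _ => ?_
    simp only [C, Matrix.of_apply, ite_mul, mul_ite, one_mul, mul_one, mul_zero, zero_mul]
    simp [Finset.sum_ite_eq, eq_comm]
  have count1 : ((Finset.univ.filter (fun p : Fin n × Fin n =>
      Ap p.1 p.2 = 1 ∧ c p.1 ≠ c p.2)).card : ℤ) =
      ∑ i, ∑ j, (if c i = c j then 0 else Ap i j) := by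
    rw [Finset.card_filter]
    push_cast
    rw [Fintype.sum_prod_type]
    refine Finset.sum_congr rfl fun i _ => Finset.sum_congr rfl fun j _ => ?_
    rcases hp01 i j with h | h <;> by_cases hc : c i = c j <;> simp [h, hc]
  have count2 : ((Finset.univ.filter (fun p : Fin n × Fin n =>
      Am p.1 p.2 = 1 ∧ c p.1 = c p.2)).card : ℤ) =
      ∑ i, ∑ j, (if c i = c j then Am i j else 0) := by
    rw [Finset.card_filter]
    push_cast
    rw [Fintype.sum_prod_type]
    refine Finset.sum_congr rfl fun i _ => Finset.sum_congr rfl fun j _ => ?_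
    rcases hm01 i j with h | h <;> by_cases hc : c i = c j <;> simp [h, hc]
  have part1 : (∑ k : Fin K, (fun i => C i k) ⬝ᵥ (M *ᵥ fun i => C i k)) =
      ((Finset.univ.filter (fun p : Fin n × Fin n =>
        Ap p.1 p.2 = 1 ∧ c p.1 ≠ c p.2)).card : ℤ) +
      ((Finset.univ.filter (fun p : Fin n × Fin n =>
        Am p.1 p.2 = 1 ∧ c p.1 = c p.2)).card : ℤ) := by
    rw [key, count1, count2]
    have h1 : ∀ i j : Fin n, (if c i = c j then M i j else 0) =
        ((if i = j then ∑ l, Ap i l else 0) - Ap i j)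
        + (if c i = c j then 0 else Ap i j)
        + (if c i = c j then Am i j else 0) := by
      intro i j
      rw [hM]
      by_cases hij : i = j
      · subst hij
        simp [hpd i, hmd i]
      · by_cases hc : c i = c j <;> simp [hij, hc]
    calc ∑ i, ∑ j, (if c i = c j then M i j else 0)
        = ∑ i, ∑ j, (((if i = j then ∑ l, Ap i l else 0) - Ap i j)
          + (if c i = c j then 0 else Ap i j)
          + (if c i = c j then Am i j else 0)) := by
          exact Finset.sum_congr rfl fun i _ => Finset.sum_congr rfl fun j _ => h1 i j
      _ = ∑ i, ∑ j, ((if i = j then ∑ l, Ap i l else 0) - Ap i j)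
          + (∑ i, ∑ j, (if c i = c j then 0 else Ap i j)
          + ∑ i, ∑ j, (if c i = c j then Am i j else 0)) := by
          simp [Finset.sum_add_distrib, add_assoc]
      _ = ((∑ i, ∑ j, (if c i = c j then 0 else Ap i j))
          + ∑ i, ∑ j, (if c i = c j then Am i j else 0)) := by
          have hz : ∑ i, ∑ j, ((if i = j then ∑ l, Ap i l else 0) - Ap i j) = 0 := by
            rw [Finset.sum_eq_zero]
            intro i _
            rw [Finset.sum_sub_distrib]
            simp [Finset.sum_ite_eq]
          rw [hz, zero_add]
  refine ⟨part1, ?_⟩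
  rw [part1]
  -- combine the two counts into one filter
  have hdisjf : ((Finset.univ.filter (fun p : Fin n × Fin n =>
        Ap p.1 p.2 = 1 ∧ c p.1 ≠ c p.2)).card : ℤ) +
      ((Finset.univ.filter (fun p : Fin n × Fin n =>
        Am p.1 p.2 = 1 ∧ c p.1 = c p.2)).card : ℤ) =
      ((Finset.univ.filter (fun p : Fin n × Fin n =>
        Ap p.1 p.2 = 1 ∧ c p.1 ≠ c p.2 ∨ Am p.1 p.2 = 1 ∧ c p.1 = c p.2)).card : ℤ) := by
    rw [Finset.filter_or, Finset.card_union_of_disjoint]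
    · push_cast; ring
    · rw [Finset.disjoint_left]
      rintro p hp hq
      simp only [Finset.mem_filter] at hp hq
      rcases hdisj p.1 p.2 with h | h
      · rw [h] at hp; exact absurd hp.2.1 (by norm_num)
      · rw [h] at hq; exact absurd hq.2.1 (by norm_num)
  rw [hdisjf]
  -- now the doubling
  set Q : Fin n × Fin n → Prop := fun p =>
    Ap p.1 p.2 = 1 ∧ c p.1 ≠ c p.2 ∨ Am p.1 p.2 = 1 ∧ c p.1 = c p.2 with hQ
  have hAps : ∀ i j, Ap j i = Ap i j := fun i j => hsp.apply i j
  have hAms : ∀ i j, Am j i = Am i j := fun i j => hsm.apply i j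
  have hQsymm : ∀ p : Fin n × Fin n, Q p → Q p.swap := by
    rintro ⟨i, j⟩ (⟨h1, h2⟩ | ⟨h1, h2⟩) <;>
      simp only [Prod.swap_prod_mk, hQ] at *
    · exact Or.inl ⟨by rw [hAps]; exact h1, fun h => h2 h.symm⟩
    · exact Or.inr ⟨by rw [hAms]; exact h1, h2.symm⟩
  have hQne : ∀ p : Fin n × Fin n, Q p → p.1 ≠ p.2 := by
    rintro ⟨i, j⟩ (⟨h1, h2⟩ | ⟨h1, h2⟩) h
    · exact h2 (by rw [h])
    · simp only at h; rw [h] at h1; rw [hmd j] at h1; norm_num at h1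
  classical
  have hsplit : (Finset.univ.filter Q) =
      (Finset.univ.filter (fun p : Fin n × Fin n => p.1 < p.2 ∧ Q p)) ∪
      (Finset.univ.filter (fun p : Fin n × Fin n => p.2 < p.1 ∧ Q p)) := by
    ext p
    simp only [Finset.mem_filter, Finset.mem_union, Finset.mem_univ, true_and]
    constructor
    · intro hq
      rcases lt_or_gt_of_ne (hQne p hq) with h | h
      · exact Or.inl ⟨h, hq⟩
      · exact Or.inr ⟨h, hq⟩
    · rintro (⟨_, hq⟩ | ⟨_, hq⟩) <;> exact hq
  have hcardeq : (Finset.univ.filter (fun p : Fin n × Fin n => p.2 < p.1 ∧ Q p)).card =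
      (Finset.univ.filter (fun p : Fin n × Fin n => p.1 < p.2 ∧ Q p)).card := by
    refine Finset.card_bij' (fun p _ => p.swap) (fun p _ => p.swap) ?_ ?_
      (fun p _ => Prod.swap_swap p) (fun p _ => Prod.swap_swap p)
    · rintro ⟨i, j⟩ hp
      simp only [Finset.mem_filter, Finset.mem_univ, true_and,
        Prod.swap_prod_mk] at hp ⊢
      exact ⟨hp.1, hQsymm _ hp.2⟩
    · rintro ⟨i, j⟩ hp
      simp only [Finset.mem_filter, Finset.mem_univ, true_and,
        Prod.swap_prod_mk] at hp ⊢
      exact ⟨hp.1, hQsymm _ hp.2⟩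
  have hdisj2 : Disjoint
      (Finset.univ.filter (fun p : Fin n × Fin n => p.1 < p.2 ∧ Q p))
      (Finset.univ.filter (fun p : Fin n × Fin n => p.2 < p.1 ∧ Q p)) := by
    rw [Finset.disjoint_left]
    rintro p hp hq
    simp only [Finset.mem_filter] at hp hq
    exact absurd hq.2.1 (not_lt_of_gt hp.2.1)
  rw [hsplit, Finset.card_union_of_disjoint hdisj2, hcardeq]
  push_cast
  ring
end

section
/- (Harary's balance theorem, cycle form) A signed graph is balanced — i.e., its vertex set can be partitioned into at most two sets such that every positive edge lies within a set and every negative edge lies between the two sets — if and only if every cycle of the graph contains an even number of negative edges. -/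
/-!
Call a dart odd when its edge is negative. If a 2-colouring makes exactly the negative edges
bichromatic, the number of odd darts along a walk is even iff its ends have the same colour, so
every closed walk, in particular every cycle, is even. Conversely, a nonempty closed walk that is
not a cycle either runs back and forth along one edge or splits at a repeated vertex into two
shorter closed walks, so by induction on length every closed walk is even once every cycle is.
Colouring each vertex by the parity of a walk to it from a fixed root of its component is then
independent of the walk, and it is the required colouring.
-/

namespace SimpleGraph

variable {V : Type*} {G : SimpleGraph V} (p : G.Dart → Bool)

namespace Walk

lemma countP_darts_reverse (hp : ∀ d, p d.symm = p d) {u v : V} (w : G.Walk u v) :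
    w.reverse.darts.countP p = w.darts.countP p := by
  simp only [darts_reverse, List.countP_reverse, List.countP_map]
  congr 1
  funext d
  exact hp d

lemma even_countP_darts_of_length_eq_two (hp : ∀ d, p d.symm = p d) {u : V} (w : G.Walk u u)
    (hw : w.length = 2) : Even (w.darts.countP p) := by
  obtain _ | ⟨h, _ | ⟨h', _ | ⟨_, _⟩⟩⟩ := w <;> simp at hw
  have := hp ⟨(_, _), h⟩
  simp_all [List.countP_cons]

theorem even_countP_darts_of_forall_isCycle (hp : ∀ d, p d.symm = p d)
    (hcyc : ∀ (u : V) (c : G.Walk u u), c.IsCycle → Even (c.darts.countP p)) {u : V}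
    (w : G.Walk u u) : Even (w.darts.countP p) := by
  induction hn : w.length using Nat.strong_induction_on generalizing u with
  | _ n ih =>
  cases w with
  | nil => simp
  | cons h q =>
    by_cases hq : q.IsPath
    · by_cases hw : (cons h q).IsCycle
      · exact hcyc _ _ hw
      · refine even_countP_darts_of_length_eq_two p hp _ ?_
        have hq0 : q.length ≠ 0 := fun h0 => h.ne (eq_of_length_eq_zero h0).symm
        simp only [isCycle_iff_isPath_tail_and_le_length, getVert_cons_succ, tail_cons,
          isPath_copy, hq, length_cons, Nat.reduceLeDiff, true_and, not_le, Order.lt_two_iff] at hw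
        rw [length_cons]
        omega
    · obtain ⟨x, b, ⟨a, c, rfl⟩, hb⟩ : ∃ x, ∃ b : G.Walk x x, b.IsSubwalk q ∧ ¬ b.Nil := by
        simpa [isPath_iff_isSubwalk_imp_nil] using hq
      have hb_pos := not_nil_iff_lt_length.mp hb
      have h_rest := ih _ (by subst hn; simp; omega) (cons h (a.append c)) rfl
      have h_loop := ih _ (by subst hn; simp; omega) b rfl
      have hsplit : (cons h ((a.append b).append c)).darts.countP p =
          (cons h (a.append c)).darts.countP p + b.darts.countP p := by
        simp only [darts_cons, darts_append, List.countP_cons, List.countP_append]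
        ring
      rw [hsplit]
      exact h_rest.add h_loop

theorem even_countP_darts_iff (c : V → Bool) (hc : ∀ d : G.Dart, p d ↔ c d.fst ≠ c d.snd)
    {u v : V} (w : G.Walk u v) : Even (w.darts.countP p) ↔ c u = c v := by
  induction w with
  | nil => simp
  | @cons x y z h q ih =>
    have hd := hc ⟨(x, y), h⟩
    rw [darts_cons, List.countP_cons]
    by_cases hpd : p ⟨(x, y), h⟩
    · rw [if_pos hpd, Nat.even_add_one, ih]
      have hxy : c x ≠ c y := hd.mp hpd
      revert hxy
      cases c x <;> cases c y <;> cases c z <;> simp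
    · rw [if_neg hpd, add_zero, ih, not_not.mp (hd.not.mp hpd)]

end Walk

theorem exists_coloring_of_forall_even_countP_darts (hp : ∀ d, p d.symm = p d)
    (heven : ∀ (u : V) (w : G.Walk u u), Even (w.darts.countP p)) :
    ∃ c : V → Bool, ∀ d : G.Dart, p d ↔ c d.fst ≠ c d.snd := by
  let root (v : V) : V := (G.connectedComponentMk v).out
  let path (v : V) : G.Walk (root v) v :=
    (ConnectedComponent.exact (G.connectedComponentMk v).out_eq).some
  refine ⟨fun v => decide (Odd ((path v).darts.countP p)), fun d => ?_⟩
  have hroot : root d.snd = root d.fst := by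
    simp only [root, ConnectedComponent.sound d.adj.reachable]
  have := heven _ ((path d.fst).append (.cons d.adj ((path d.snd).reverse.copy rfl hroot)))
  simp only [Walk.darts_append, Walk.darts_cons, Walk.darts_copy, List.countP_append,
    List.countP_cons, Walk.countP_darts_reverse p hp] at this
  by_cases hpd : p d <;>
    simp [hpd, Nat.even_add, Nat.even_add_one, ← Nat.not_even_iff_odd] at this ⊢ <;> tauto

end SimpleGraph

theorem harary_balance_general {V : Type}
    (G : SimpleGraph V)
    (σ : V → V → ℤ)
    (hsymm : ∀ u v, σ u v = σ v u)
    (hsign : ∀ u v, G.Adj u v → σ u v = 1 ∨ σ u v = -1) :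
    (∃ c : V → Bool, ∀ u v, G.Adj u v →
        (σ u v = 1 → c u = c v) ∧ (σ u v = -1 → c u ≠ c v)) ↔
      ∀ (u : V) (w : G.Walk u u), w.IsCycle →
        Even (w.darts.countP (fun d => σ d.toProd.1 d.toProd.2 = -1)) := by
  set negative : G.Dart → Bool := fun d => σ d.toProd.1 d.toProd.2 = -1
  have hneg : ∀ d : G.Dart, negative d.symm = negative d := fun d => by
    simp [negative, hsymm d.snd]
  constructor
  · rintro ⟨c, hc⟩ u w -
    refine (w.even_countP_darts_iff negative c fun d => ?_).mpr rfl
    have := hc d.fst d.snd d.adj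
    rcases hsign d.fst d.snd d.adj with h | h <;> simp_all [negative]
  · intro hcyc
    obtain ⟨c, hc⟩ := G.exists_coloring_of_forall_even_countP_darts negative hneg
      fun u w => w.even_countP_darts_of_forall_isCycle negative hneg hcyc
    refine ⟨c, fun u v huv => ⟨fun h => ?_, fun h => ?_⟩⟩
    · simpa [negative, h] using hc ⟨(u, v), huv⟩
    · simpa [negative, h] using hc ⟨(u, v), huv⟩

theorem harary_balance {V : Type} [Fintype V] [DecidableEq V]
    (G : SimpleGraph V) [DecidableRel G.Adj]
    (σ : V → V → ℤ)
    (hsymm : ∀ u v, σ u v = σ v u)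
    (hsign : ∀ u v, G.Adj u v → σ u v = 1 ∨ σ u v = -1) :
    (∃ c : V → Bool, ∀ u v, G.Adj u v →
        (σ u v = 1 → c u = c v) ∧ (σ u v = -1 → c u ≠ c v)) ↔
      ∀ (u : V) (w : G.Walk u u), w.IsCycle →
        Even (w.darts.countP (fun d => σ d.toProd.1 d.toProd.2 = -1)) :=
  harary_balance_general G σ hsymm hsign
end

section
/- (Davis's weak balance theorem for complete graphs) A complete signed graph is weakly balanced — i.e., its vertex set can be partitioned into K ≥ 1 disjoint clusters such that every positive edge lies within a cluster and every negative edge lies between distinct clusters — if and only if no triangle of the graph has exactly one negative edge (equivalently, exactly two positive edges). -/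
theorem davis_weak_balance {V : Type} [Fintype V] [DecidableEq V]
    (σ : V → V → ℤ)
    (hsymm : ∀ u v, σ u v = σ v u)
    (hsign : ∀ u v, u ≠ v → σ u v = 1 ∨ σ u v = -1) :
    (∃ K : ℕ, 1 ≤ K ∧ ∃ c : V → Fin K, ∀ u v, u ≠ v →
        (σ u v = 1 → c u = c v) ∧ (σ u v = -1 → c u ≠ c v)) ↔
      ¬ ∃ u v w : V, u ≠ v ∧ v ≠ w ∧ u ≠ w ∧
        (σ u v = -1 ∧ σ v w = 1 ∧ σ u w = 1 ∨
         σ u v = 1 ∧ σ v w = -1 ∧ σ u w = 1 ∨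
         σ u v = 1 ∧ σ v w = 1 ∧ σ u w = -1) := by
  constructor
  · rintro ⟨K, hK, c, hc⟩ ⟨u, v, w, huv, hvw, huw, h⟩
    rcases h with ⟨h1, h2, h3⟩ | ⟨h1, h2, h3⟩ | ⟨h1, h2, h3⟩
    · exact ((hc u v huv).2 h1) (((hc u w huw).1 h3).trans ((hc v w hvw).1 h2).symm)
    · exact ((hc v w hvw).2 h2) (((hc u v huv).1 h1).symm.trans ((hc u w huw).1 h3))
    · exact ((hc u w huw).2 h3) (((hc u v huv).1 h1).trans ((hc v w hvw).1 h2))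
  · intro hno
    set r : V → V → Prop := fun u v => u = v ∨ σ u v = 1 with hr
    have hsym : ∀ u v, r u v → r v u := by
      rintro u v (h | h)
      · exact Or.inl h.symm
      · exact Or.inr ((hsymm v u).trans h)
    have htrans : ∀ u v w, r u v → r v w → r u w := by
      rintro u v w (rfl | h1) h2
      · exact h2
      · rcases h2 with rfl | h2
        · exact Or.inr h1
        · by_cases huw : u = w
          · exact Or.inl huw
          · rcases hsign u w huw with h3 | h3
            · exact Or.inr h3
            · exfalso
              have huv : u ≠ v := by rintro rfl; rw [h2] at h3; omega
              have hvw : v ≠ w := by rintro rfl; rw [h1] at h3; omega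
              exact hno ⟨u, v, w, huv, hvw, huw, Or.inr (Or.inr ⟨h1, h2, h3⟩)⟩
    let s : Setoid V := ⟨r, fun _ => Or.inl rfl, fun h => hsym _ _ h,
      fun h1 h2 => htrans _ _ _ h1 h2⟩
    have hdec : DecidableRel s.r := fun x y =>
      (inferInstance : Decidable (x = y ∨ σ x y = 1))
    have hfin : Fintype (Quotient s) := @Quotient.fintype V _ s hdec
    let e := @Fintype.equivFin (Quotient s) hfin
    refine ⟨Fintype.card (Quotient s) + 1, Nat.le_add_left 1 _,
      fun v => Fin.castLE (Nat.le_succ _) (e (Quotient.mk s v)), fun u v huv => ?_⟩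
    constructor
    · intro h1
      have : Quotient.mk s u = Quotient.mk s v := Quotient.sound (Or.inr h1)
      exact congrArg (fun q => Fin.castLE (Nat.le_succ _) (e q)) this
    · intro h1 hc
      have : Quotient.mk s u = Quotient.mk s v := by
        apply e.injective
        exact Fin.castLE_injective _ hc
      have := Quotient.exact this
      rcases this with h | h
      · exact huv h
      · rw [h1] at h; omega
end
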